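/- arXiv:1107.4842 — 3 statements merged into one kernel-verified Lean document; each statement's English description precedes it below -/
import Mathlib

section
/- Let N ∈ [1,∞) and let (X,d,m) be a geodesic metric measure space in which the Rényi entropy functional E_N is strongly displacement convex. Let x ∈ X, r > 0, write B = B(x,r), assume 0 < m(B) < ∞, and let B⁺ ⊂ B be a Borel set with m(B⁺) = m(B)/2. Let π ∈ GeoOpt(m(B⁺)^{-1} m|_{B⁺}, δ_x) be a geodesic from the normalized restriction of m to B⁺ to the Dirac mass at x. Then for every t ∈ [0,1/2] the density ρ_t of the absolutely continuous part of (e_t)_#π with respect to m satisfies ρ_t(y) ≤ 2^{N+1}/m(B) for m-almost every y ∈ X. -/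
/-!
Restrict the plan `π` to the geodesics whose position at time `t` lies in a set `A` where
`ρ_t ≥ C`, and renormalize by `p = μ_t(A)`. The marginals of the restricted plan still form a
`W₂`-geodesic: all its geodesics end at `x`, so the distance to `δ_x` decreases linearly, and the
triangle inequality through `δ_x` forces equality. At time `0` its density is at most
`(p · m(B⁺))⁻¹`, at time `t` it is at least `C / p` wherever it is positive, so comparing
`ρ^{1-1/N}` with a multiple of `ρ` gives `E_N ≤ -(p · m(B⁺))^{1/N}` at time `0` and
`E_N ≥ -(p / C)^{1/N}` at time `t`. Displacement convexity together with `E_N(δ_x) ≤ 0` yields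
`(1-t)^N C ≤ 1 / m(B⁺) = 2 / m(B)`, and `(1-t)^N ≥ 2^{-N}` for `t ≤ 1/2`.
-/

open MeasureTheory Metric Set Filter ProbabilityTheory
open scoped ENNReal NNReal Topology ProbabilityTheory

noncomputable section

variable {X : Type*} [MetricSpace X] [MeasurableSpace X]

/-- A constant-speed geodesic parametrized on `[0,1]`:
`d(γ(s),γ(t)) = |s - t| · d(γ(0),γ(1))` for all `s,t ∈ [0,1]`. -/
def IsGeodesicMap (γ : ℝ → X) : Prop :=
  ∀ s ∈ Set.Icc (0:ℝ) 1, ∀ t ∈ Set.Icc (0:ℝ) 1,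
    dist (γ s) (γ t) = |s - t| * dist (γ 0) (γ 1)

/-- A geodesic metric space: any two points are joined by a geodesic. -/
def IsGeodesicSpace (X : Type*) [MetricSpace X] : Prop :=
  ∀ x y : X, ∃ γ : ℝ → X, IsGeodesicMap γ ∧ γ 0 = x ∧ γ 1 = y

/-- The squared Wasserstein cost: infimum over couplings of `∫ d(x,y)² dσ`. -/
def W2sq (μ ν : Measure X) : ℝ≥0∞ :=
  ⨅ (σ : Measure (X × X)) (_ : σ.map Prod.fst = μ ∧ σ.map Prod.snd = ν),
    ∫⁻ p, edist p.1 p.2 ^ 2 ∂σ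

/-- The Wasserstein distance `W₂`, with values in `[0,∞]`. -/
def W2 (μ ν : Measure X) : ℝ≥0∞ := W2sq μ ν ^ (1/2 : ℝ)

/-- A geodesic in the Wasserstein space `(P(X), W₂)`, parametrized on `[0,1]`. -/
def IsW2Geodesic (Γ : ℝ → Measure X) : Prop :=
  (∀ t ∈ Set.Icc (0:ℝ) 1, IsProbabilityMeasure (Γ t)) ∧
  W2 (Γ 0) (Γ 1) ≠ ∞ ∧
  ∀ s ∈ Set.Icc (0:ℝ) 1, ∀ t ∈ Set.Icc (0:ℝ) 1,
    W2 (Γ s) (Γ t) = ENNReal.ofReal |s - t| * W2 (Γ 0) (Γ 1)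

/-- The evaluation map `e_t : γ ↦ γ(t)`. -/
def evalGeo (t : ℝ) : (ℝ → X) → X := fun γ => γ t

/-- `π ∈ GeoOpt(μ,ν)`: a probability measure on geodesics of `X` such that
`t ↦ (e_t)_# π` is a geodesic in `(P(X), W₂)` from `μ` to `ν`. -/
def IsGeoOpt (μ ν : Measure X) (π : Measure (ℝ → X)) : Prop :=
  IsProbabilityMeasure π ∧ (∀ᵐ γ ∂π, IsGeodesicMap γ) ∧
  π.map (evalGeo 0) = μ ∧ π.map (evalGeo 1) = ν ∧
  IsW2Geodesic (fun t => π.map (evalGeo t))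

/-- `ρ ↦ ρ^(1-1/N)` with the convention `0^(1-1/N) = 0` (also for `N = 1`). -/
def renyiIntegrand (N : ℝ) (ρ : ℝ≥0∞) : ℝ≥0∞ :=
  haveI := Classical.dec (ρ = 0)
  if ρ = 0 then 0 else ρ ^ (1 - 1/N)

/-- The Rényi entropy functional `E_N(μ) = -∫ ρ^(1-1/N) dm`, where `ρ` is the density of
the absolutely continuous part of `μ` with respect to `m`. -/
def renyiEntropy (N : ℝ) (m μ : Measure X) : EReal :=
  - ((∫⁻ x, renyiIntegrand N (μ.rnDeriv m x) ∂m : ℝ≥0∞) : EReal)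

/-- The Shannon entropy functional `E_∞(μ) = ∫ ρ log ρ dm` if `μ = ρ m ≪ m`
(defined as the difference of the integrals of the positive and negative parts),
and `+∞` otherwise. -/
def shannonEntropy (m μ : Measure X) : EReal :=
  haveI := Classical.dec (μ ≪ m)
  if μ ≪ m then
    ((∫⁻ x, ENNReal.ofReal ((μ.rnDeriv m x).toReal * Real.log (μ.rnDeriv m x).toReal) ∂m :
        ℝ≥0∞) : EReal)
      - ((∫⁻ x, ENNReal.ofReal (-((μ.rnDeriv m x).toReal *
          Real.log (μ.rnDeriv m x).toReal)) ∂m : ℝ≥0∞) : EReal)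
  else (⊤ : EReal)

/-- A functional on `P(X)` is strongly displacement convex if it is convex along every
geodesic of the Wasserstein space. -/
def StronglyDisplacementConvex (E : Measure X → EReal) : Prop :=
  ∀ Γ : ℝ → Measure X, IsW2Geodesic Γ → ∀ s ∈ Set.Icc (0:ℝ) 1,
    E (Γ s) ≤ ((1 - s : ℝ) : EReal) * E (Γ 0) + ((s : ℝ) : EReal) * E (Γ 1)

/-- The displacement convexity class `DC_∞`. -/
def MemDCinf (F : ℝ → ℝ) : Prop :=
  ContinuousOn F (Set.Ici 0) ∧ ConvexOn ℝ (Set.Ici 0) F ∧ F 0 = 0 ∧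
  ConvexOn ℝ Set.univ (fun l : ℝ => Real.exp l * F (Real.exp (-l)))

/-- The displacement convexity class `DC_N`, `N ∈ [1,∞)`. -/
def MemDCN (N : ℝ) (F : ℝ → ℝ) : Prop :=
  ContinuousOn F (Set.Ici 0) ∧ ConvexOn ℝ (Set.Ici 0) F ∧ F 0 = 0 ∧
  ConvexOn ℝ (Set.Ioi 0) (fun l : ℝ => l ^ N * F (l ^ (-N)))

/-- `F′(∞) = lim_{r → ∞} F(r)/r` (as an extended real number). -/
def derivAtInfty (F : ℝ → ℝ) : EReal :=
  Filter.limsup (fun r : ℝ => ((F r / r : ℝ) : EReal)) Filter.atTop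

/-- The integral functional `𝔉(μ) = ∫ F(ρ) dm + F′(∞) μ^⊥(X)` associated to `F`,
where `μ = ρ m + μ^⊥` is the Lebesgue decomposition of `μ` w.r.t. `m`. -/
def entFunctional (F : ℝ → ℝ) (m μ : Measure X) : EReal :=
  ((∫ x, F ((μ.rnDeriv m x).toReal) ∂m : ℝ) : EReal)
    + derivAtInfty F * ((μ.singularPart m Set.univ : ℝ≥0∞) : EReal)

/-- Distortion coefficients `β_t(x,y)` for `N = ∞`. -/
def betaInf (K : ℝ) (t : ℝ) (x y : X) : ℝ :=
  Real.exp (K * (1 - t ^ 2) * dist x y ^ 2 / 6)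

/-- Distortion coefficients `β_t(x,y)` for `N ∈ [1,∞)` and `K ≤ 0`. -/
def betaFin (K N : ℝ) (t : ℝ) (x y : X) : ℝ :=
  haveI := Classical.dec (K = 0 ∨ N = 1)
  if K = 0 ∨ N = 1 then 1
  else (Real.sinh (t * (Real.sqrt (|K| / (N - 1)) * dist x y)) /
       (t * Real.sinh (Real.sqrt (|K| / (N - 1)) * dist x y))) ^ (N - 1)

/-- The joint law of the endpoints `(γ(0), γ(1))` under `π`. -/
def endpointLaw (π : Measure (ℝ → X)) : Measure (X × X) :=
  π.map (fun γ => (γ 0, γ 1))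

/-- The curvature-dimension condition `CD(K,∞)` (for `K ≤ 0`). -/
def IsCDinf (K : ℝ) (m : Measure X) : Prop :=
  ∀ μ₀ μ₁ : Measure X, IsProbabilityMeasure μ₀ → IsProbabilityMeasure μ₁ →
    W2 μ₀ μ₁ ≠ ∞ →
    ∃ π : Measure (ℝ → X), IsGeoOpt μ₀ μ₁ π ∧
      ∃ κ₀ κ₁ : Kernel X X, IsMarkovKernel κ₀ ∧ IsMarkovKernel κ₁ ∧
        μ₀ ⊗ₘ κ₀ = endpointLaw π ∧
        μ₁ ⊗ₘ κ₁ = (endpointLaw π).map Prod.swap ∧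
        ∀ F : ℝ → ℝ, MemDCinf F → ∀ t ∈ Set.Icc (0:ℝ) 1,
          entFunctional F m (π.map (evalGeo t)) ≤
            ((1 - t : ℝ) : EReal) *
              ((∫ x₀, ∫ x₁, betaInf K (1 - t) x₀ x₁ *
                  F ((μ₀.rnDeriv m x₀).toReal / betaInf K (1 - t) x₀ x₁) ∂(κ₀ x₀) ∂m : ℝ) : EReal)
            + ((t : ℝ) : EReal) *
              ((∫ x₁, ∫ x₀, betaInf K t x₀ x₁ *
                  F ((μ₁.rnDeriv m x₁).toReal / betaInf K t x₀ x₁) ∂(κ₁ x₁) ∂m : ℝ) : EReal)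
            + derivAtInfty F *
              ((ENNReal.ofReal (1 - t) * μ₀.singularPart m Set.univ
                + ENNReal.ofReal t * μ₁.singularPart m Set.univ : ℝ≥0∞) : EReal)

/-- The curvature-dimension condition `CD(K,N)` for `K ≤ 0`, `N ∈ [1,∞)`. -/
def IsCDfin (K N : ℝ) (m : Measure X) : Prop :=
  ∀ μ₀ μ₁ : Measure X, IsProbabilityMeasure μ₀ → IsProbabilityMeasure μ₁ →
    W2 μ₀ μ₁ ≠ ∞ →
    ∃ π : Measure (ℝ → X), IsGeoOpt μ₀ μ₁ π ∧
      ∃ κ₀ κ₁ : Kernel X X, IsMarkovKernel κ₀ ∧ IsMarkovKernel κ₁ ∧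
        μ₀ ⊗ₘ κ₀ = endpointLaw π ∧
        μ₁ ⊗ₘ κ₁ = (endpointLaw π).map Prod.swap ∧
        ∀ F : ℝ → ℝ, MemDCN N F → ∀ t ∈ Set.Icc (0:ℝ) 1,
          entFunctional F m (π.map (evalGeo t)) ≤
            ((1 - t : ℝ) : EReal) *
              ((∫ x₀, ∫ x₁, betaFin K N (1 - t) x₀ x₁ *
                  F ((μ₀.rnDeriv m x₀).toReal / betaFin K N (1 - t) x₀ x₁) ∂(κ₀ x₀) ∂m : ℝ) : EReal)
            + ((t : ℝ) : EReal) *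
              ((∫ x₁, ∫ x₀, betaFin K N t x₀ x₁ *
                  F ((μ₁.rnDeriv m x₁).toReal / betaFin K N t x₀ x₁) ∂(κ₁ x₁) ∂m : ℝ) : EReal)
            + derivAtInfty F *
              ((ENNReal.ofReal (1 - t) * μ₀.singularPart m Set.univ
                + ENNReal.ofReal t * μ₁.singularPart m Set.univ : ℝ≥0∞) : EReal)

/-- The support of a measure on a metric space. -/
def msupport (μ : Measure X) : Set X := {x : X | ∀ ε > 0, 0 < μ (Metric.ball x ε)}

/-- `g` is an upper gradient of `u`: for every curve `γ : [0,1] → X` which is Lipschitz with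
constant `l` (in particular of length at most `l`),
`|u(γ(1)) - u(γ(0))| ≤ l ∫₀¹ g(γ(t)) dt`. -/
def IsUpperGradient (u : X → ℝ) (g : X → ℝ≥0∞) : Prop :=
  Measurable g ∧
  ∀ (γ : ℝ → X) (l : ℝ≥0), LipschitzOnWith l γ (Set.Icc 0 1) →
    ENNReal.ofReal |u (γ 1) - u (γ 0)| ≤ (l : ℝ≥0∞) * ∫⁻ t in Set.Icc (0:ℝ) 1, g (γ t)

/-- The evolution variational inequality (E.V.I.) condition for the entropy functional `E`:
from every absolutely continuous probability measure there starts a curve `(μ_t)_{t ≥ 0}` with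
`limsup_{h ↓ 0} (1/2h)(W₂²(ν,μ_{t+h}) - W₂²(ν,μ_t)) ≤ E(ν) - E(μ_t)` for all `t ≥ 0` and all
absolutely continuous probability measures `ν`. -/
def EVIGradientFlow (E : Measure X → EReal) (m : Measure X) : Prop :=
  ∀ μ₀ : Measure X, IsProbabilityMeasure μ₀ → μ₀ ≪ m →
    ∃ μ : ℝ → Measure X, μ 0 = μ₀ ∧ (∀ t : ℝ, 0 ≤ t → IsProbabilityMeasure (μ t)) ∧
      ∀ t : ℝ, 0 ≤ t → ∀ ν : Measure X, IsProbabilityMeasure ν → ν ≪ m →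
        Filter.limsup (fun h : ℝ =>
            (((1 / (2 * h)) * ((W2sq ν (μ (t + h))).toReal - (W2sq ν (μ t)).toReal) : ℝ) : EReal))
          (nhdsWithin 0 (Set.Ioi 0)) ≤ E ν - E (μ t)

end

section Wasserstein

lemma measurable_evalGeo {X : Type*} [MeasurableSpace X] (t : ℝ) :
    Measurable (evalGeo (X := X) t) :=
  measurable_pi_apply t

lemma ENNReal.sq_mul_rpow_half (a z : ℝ≥0∞) :
    (a ^ 2 * z) ^ (1/2 : ℝ) = a * z ^ (1/2 : ℝ) := by
  rw [ENNReal.mul_rpow_of_nonneg _ _ (by norm_num), ← ENNReal.rpow_natCast, ← ENNReal.rpow_mul]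
  norm_num

/-- `g` carries no measurability assumption so that it can be `edist` on `X × X`, which need not
be measurable for the product σ-algebra unless `X` is second countable. -/
lemma lintegral_sq_rpow_half_le_add {α : Type*} [MeasurableSpace α] {μ : Measure α}
    {f g h : α → ℝ≥0∞} (hf : AEMeasurable f μ) (hh : AEMeasurable h μ)
    (hfgh : ∀ a, f a ≤ g a + h a) :
    (∫⁻ a, f a ^ 2 ∂μ) ^ (1/2 : ℝ) ≤
      (∫⁻ a, g a ^ 2 ∂μ) ^ (1/2 : ℝ) + (∫⁻ a, h a ^ 2 ∂μ) ^ (1/2 : ℝ) := by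
  -- Minkowski applies to the measurable pair `f - h`, `h`, and `f - h ≤ g`
  have hmink := ENNReal.lintegral_Lp_add_le (p := 2) (hf.sub hh) hh one_le_two
  simp only [Pi.add_apply, Pi.sub_apply, ENNReal.rpow_two] at hmink
  refine le_trans ?_ (hmink.trans (add_le_add_left ?_ _))
  · gcongr
    exact le_tsub_add
  · gcongr
    exact tsub_le_iff_right.2 (hfgh _)

variable {X : Type*} [MetricSpace X] [MeasurableSpace X]

lemma W2sq_le_lintegral {μ ν : Measure X} (σ : Measure (X × X))
    (h₁ : σ.map Prod.fst = μ) (h₂ : σ.map Prod.snd = ν) :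
    W2sq μ ν ≤ ∫⁻ p, edist p.1 p.2 ^ 2 ∂σ :=
  iInf₂_le σ ⟨h₁, h₂⟩

lemma W2_eq_iInf (μ ν : Measure X) :
    W2 μ ν = ⨅ (σ : Measure (X × X)) (_ : σ.map Prod.fst = μ ∧ σ.map Prod.snd = ν),
      (∫⁻ p, edist p.1 p.2 ^ 2 ∂σ) ^ (1/2 : ℝ) := by
  simp only [W2, W2sq, ← ENNReal.orderIsoRpow_apply (1/2 : ℝ) (by norm_num), OrderIso.map_iInf]

lemma W2sq_comm_le (μ ν : Measure X) : W2sq μ ν ≤ W2sq ν μ := by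
  refine le_iInf₂ fun σ hσ => ?_
  let swap : X × X ≃ᵐ X × X := MeasurableEquiv.prodComm
  refine (W2sq_le_lintegral (σ.map swap) ?_ ?_).trans_eq ?_
  · rw [Measure.map_map measurable_fst swap.measurable]
    exact hσ.2
  · rw [Measure.map_map measurable_snd swap.measurable]
    exact hσ.1
  · rw [lintegral_map_equiv]
    exact lintegral_congr fun p => by rw [edist_comm]; rfl

lemma W2_comm (μ ν : Measure X) : W2 μ ν = W2 ν μ := by
  rw [W2, W2, le_antisymm (W2sq_comm_le μ ν) (W2sq_comm_le ν μ)]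

lemma W2sq_map_le_lintegral {α : Type*} [MeasurableSpace α] (π : Measure α) {f g : α → X}
    (hf : Measurable f) (hg : Measurable g) :
    W2sq (π.map f) (π.map g) ≤ ∫⁻ a, edist (f a) (g a) ^ 2 ∂π := by
  refine (W2sq_le_lintegral (π.map fun a => (f a, g a)) ?_ ?_).trans (lintegral_map_le _ _)
  · rw [Measure.map_map measurable_fst (hf.prodMk hg)]
    rfl
  · rw [Measure.map_map measurable_snd (hf.prodMk hg)]
    rfl

variable [OpensMeasurableSpace X]

lemma W2sq_dirac (ν : Measure X) [IsProbabilityMeasure ν] (x : X) :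
    W2sq ν (Measure.dirac x) = ∫⁻ y, edist y x ^ 2 ∂ν := by
  have hpair : Measurable fun y : X => (y, x) := measurable_id.prodMk measurable_const
  refine le_antisymm ((W2sq_le_lintegral (ν.map fun y => (y, x)) ?_ ?_).trans
    (lintegral_map_le _ _)) (le_iInf₂ fun σ hσ => ?_)
  · rw [Measure.map_map measurable_fst hpair]
    exact Measure.map_id'
  · rw [Measure.map_map measurable_snd hpair, Function.comp_def, Measure.map_const,
      measure_univ, one_smul]
  · have hsnd : ∀ᵐ p ∂σ, p.2 = x :=
      ae_of_ae_map (f := Prod.snd) (p := fun y => y = x) measurable_snd.aemeasurable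
        (hσ.2 ▸ (ae_dirac_iff (p := fun y => y = x) (measurableSet_singleton x)).2 rfl)
    rw [← hσ.1, lintegral_map (measurable_edist_left.pow_const 2) measurable_fst]
    exact (lintegral_congr_ae (hsnd.mono fun p hp => by rw [hp])).le

lemma W2_dirac_le_add (ν μ : Measure X) [IsProbabilityMeasure ν] [IsProbabilityMeasure μ]
    (x : X) : W2 ν (Measure.dirac x) ≤ W2 ν μ + W2 μ (Measure.dirac x) := by
  rw [W2_eq_iInf ν μ, ENNReal.iInf_add]
  refine le_iInf fun σ => ?_
  rw [ENNReal.iInf_add]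
  refine le_iInf fun ⟨h₁, h₂⟩ => ?_
  have hmeas : Measurable fun y => edist y x ^ 2 := measurable_edist_left.pow_const 2
  rw [W2, W2, W2sq_dirac, W2sq_dirac, ← h₁, ← h₂, lintegral_map hmeas measurable_fst,
    lintegral_map hmeas measurable_snd]
  exact lintegral_sq_rpow_half_le_add
    (measurable_edist_left.comp measurable_fst).aemeasurable
    (measurable_edist_left.comp measurable_snd).aemeasurable
    fun p => edist_triangle p.1 p.2 x

end Wasserstein

section GeodesicToDirac

variable {X : Type*} [MetricSpace X] [MeasurableSpace X] [OpensMeasurableSpace X]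

lemma isW2Geodesic_of_W2_dirac {Γ : ℝ → Measure X} {x : X} {L : ℝ≥0∞}
    (hprob : ∀ s ∈ Icc (0:ℝ) 1, IsProbabilityMeasure (Γ s)) (hΓ₁ : Γ 1 = Measure.dirac x)
    (hL : L ≠ ∞)
    (hle : ∀ s ∈ Icc (0:ℝ) 1, ∀ u ∈ Icc (0:ℝ) 1,
      W2 (Γ s) (Γ u) ≤ ENNReal.ofReal |s - u| * L)
    (hdirac : ∀ s ∈ Icc (0:ℝ) 1, W2 (Γ s) (Measure.dirac x) = ENNReal.ofReal (1 - s) * L) :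
    IsW2Geodesic Γ := by
  have h01 : W2 (Γ 0) (Γ 1) = L := by
    rw [hΓ₁, hdirac 0 ⟨le_rfl, zero_le_one⟩, sub_zero, ENNReal.ofReal_one, one_mul]
  -- the triangle inequality through `δ_x` reverses `hle`
  have hge : ∀ s ∈ Icc (0:ℝ) 1, ∀ u ∈ Icc (0:ℝ) 1, s ≤ u →
      ENNReal.ofReal (u - s) * L ≤ W2 (Γ s) (Γ u) := by
    intro s hs u hu hsu
    have := hprob s hs
    have := hprob u hu
    have htri := W2_dirac_le_add (Γ s) (Γ u) x
    rw [hdirac s hs, hdirac u hu, show 1 - s = (u - s) + (1 - u) by ring,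
      ENNReal.ofReal_add (by linarith) (by linarith [hu.2]), add_mul] at htri
    exact (ENNReal.add_le_add_iff_right (ENNReal.mul_ne_top ENNReal.ofReal_ne_top hL)).1 htri
  refine ⟨hprob, h01.symm ▸ hL, fun s hs u hu => ?_⟩
  rw [h01]
  refine le_antisymm (hle s hs u hu) ?_
  rcases le_total s u with hsu | hus
  · rw [abs_of_nonpos (sub_nonpos.2 hsu), neg_sub]
    exact hge s hs u hu hsu
  · rw [abs_of_nonneg (sub_nonneg.2 hus), W2_comm]
    exact hge u hu s hs hus

lemma lintegral_edist_sq_eq_of_ae_isGeodesicMap {π : Measure (ℝ → X)} {x : X}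
    (hgeo : ∀ᵐ γ ∂π, IsGeodesicMap γ) (h₁ : ∀ᵐ γ ∂π, γ 1 = x)
    {s u : ℝ} (hs : s ∈ Icc (0:ℝ) 1) (hu : u ∈ Icc (0:ℝ) 1) :
    ∫⁻ γ, edist (γ s) (γ u) ^ 2 ∂π =
      ENNReal.ofReal |s - u| ^ 2 * ∫⁻ γ, edist (γ 0) x ^ 2 ∂π := by
  have hmeas : Measurable fun γ : ℝ → X => edist (γ 0) x ^ 2 :=
    (measurable_edist_left.comp (measurable_pi_apply 0)).pow_const 2
  rw [← lintegral_const_mul _ hmeas]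
  refine lintegral_congr_ae ?_
  filter_upwards [hgeo, h₁] with γ hγ hγ₁
  rw [edist_dist, hγ s hs u hu, hγ₁, ENNReal.ofReal_mul (abs_nonneg _), ← edist_dist, mul_pow]

lemma isW2Geodesic_map_evalGeo {π : Measure (ℝ → X)} [IsProbabilityMeasure π] {x : X}
    (hgeo : ∀ᵐ γ ∂π, IsGeodesicMap γ) (h₁ : ∀ᵐ γ ∂π, γ 1 = x)
    (hfin : ∫⁻ γ, edist (γ 0) x ^ 2 ∂π ≠ ∞) :
    IsW2Geodesic fun s => π.map (evalGeo s) := by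
  have hmap₁ : π.map (evalGeo 1) = Measure.dirac x := by
    have hconst : evalGeo (X := X) 1 =ᵐ[π] fun _ => x := h₁
    rw [Measure.map_congr hconst, Measure.map_const, measure_univ, one_smul]
  refine isW2Geodesic_of_W2_dirac
    (fun s _ => Measure.isProbabilityMeasure_map (measurable_evalGeo s).aemeasurable) hmap₁
    (ENNReal.rpow_ne_top_of_nonneg (by norm_num : (0:ℝ) ≤ 1/2) hfin) (fun s hs u hu => ?_)
    (fun s hs => ?_)
  · rw [← ENNReal.sq_mul_rpow_half,
      ← lintegral_edist_sq_eq_of_ae_isGeodesicMap hgeo h₁ hs hu]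
    exact ENNReal.rpow_le_rpow
      (W2sq_map_le_lintegral π (measurable_evalGeo s) (measurable_evalGeo u)) (by norm_num)
  · have := Measure.isProbabilityMeasure_map (μ := π) (measurable_evalGeo s).aemeasurable
    have hend : ∫⁻ γ, edist (γ s) x ^ 2 ∂π = ∫⁻ γ, edist (γ s) (γ 1) ^ 2 ∂π :=
      lintegral_congr_ae (h₁.mono fun γ hγ => by simp only [hγ])
    rw [W2, W2sq_dirac, lintegral_map (measurable_edist_left.pow_const 2) (measurable_evalGeo s)]
    simp only [evalGeo]
    rw [hend, lintegral_edist_sq_eq_of_ae_isGeodesicMap hgeo h₁ hs ⟨zero_le_one, le_rfl⟩,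
      ENNReal.sq_mul_rpow_half, abs_sub_comm, abs_of_nonneg (sub_nonneg.2 hs.2)]

end GeodesicToDirac

lemma ENNReal.rpow_neg_le_rpow_neg {x y : ℝ≥0∞} (hxy : x ≤ y) {z : ℝ} (hz : 0 ≤ z) :
    y ^ (-z) ≤ x ^ (-z) := by
  rw [ENNReal.rpow_neg, ENNReal.rpow_neg]
  exact ENNReal.inv_le_inv.2 (ENNReal.rpow_le_rpow hxy hz)

lemma ENNReal.rpow_mul_le_of_mul_rpow_neg_le {N : ℝ} (hN : 0 < N) {s p k C : ℝ≥0∞}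
    (hp₀ : p ≠ 0) (hp : p ≠ ∞) (hk₀ : k ≠ 0) (hk : k ≠ ∞)
    (h : s * (p⁻¹ * k) ^ (-(1/N)) ≤ (p⁻¹ * C) ^ (-(1/N))) : s ^ N * C ≤ k := by
  have hpow := ENNReal.rpow_le_rpow h hN.le
  rw [ENNReal.mul_rpow_of_nonneg _ _ hN.le, ← ENNReal.rpow_mul, ← ENNReal.rpow_mul,
    show -(1/N) * N = -1 by field_simp, ENNReal.rpow_neg_one, ENNReal.rpow_neg_one,
    ENNReal.mul_inv (.inl (ENNReal.inv_ne_zero.2 hp)) (.inl (ENNReal.inv_ne_top.2 hp₀)),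
    ENNReal.mul_inv (.inl (ENNReal.inv_ne_zero.2 hp)) (.inl (ENNReal.inv_ne_top.2 hp₀)),
    inv_inv, mul_left_comm, ENNReal.mul_le_mul_iff_right hp₀ hp, ENNReal.le_inv_iff_mul_le,
    mul_right_comm, mul_comm _ k⁻¹] at hpow
  simpa using (ENNReal.inv_mul_le_iff hk₀ hk).1 hpow

section Renyi

variable {N : ℝ} {a b z : ℝ≥0∞}

lemma renyiIntegrand_eq_mul_rpow (hz₀ : z ≠ 0) (hz : z ≠ ∞) :
    renyiIntegrand N z = z * z ^ (-(1/N)) := by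
  rw [renyiIntegrand, if_neg hz₀, sub_eq_add_neg, ENNReal.rpow_add _ _ hz₀ hz, ENNReal.rpow_one]

lemma mul_rpow_le_renyiIntegrand (hN : 0 ≤ N) (ha : a ≠ ∞) (hz : z ≤ a) :
    z * a ^ (-(1/N)) ≤ renyiIntegrand N z := by
  rcases eq_or_ne z 0 with rfl | hz₀
  · simp
  rw [renyiIntegrand_eq_mul_rpow hz₀ (ne_top_of_le_ne_top ha hz)]
  exact mul_le_mul_right (ENNReal.rpow_neg_le_rpow_neg hz (by positivity)) z

lemma renyiIntegrand_le_mul_rpow (hN : 0 ≤ N) (hb : b ≠ ∞) (hz : z = 0 ∨ b ≤ z) :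
    renyiIntegrand N z ≤ z * b ^ (-(1/N)) := by
  rcases hz with rfl | hbz
  · simp [renyiIntegrand]
  rcases eq_or_ne z 0 with rfl | hz₀
  · simp [renyiIntegrand]
  rcases eq_or_ne z ∞ with rfl | hz
  · rw [ENNReal.top_mul (by
      rw [ENNReal.rpow_neg, ne_eq, ENNReal.inv_eq_zero]
      exact ENNReal.rpow_ne_top_of_nonneg (by positivity) hb)]
    exact le_top
  rw [renyiIntegrand_eq_mul_rpow hz₀ hz]
  exact mul_le_mul_right (ENNReal.rpow_neg_le_rpow_neg hbz (by positivity)) z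

variable {α : Type*} [MeasurableSpace α] {m : Measure α} {f : α → ℝ≥0∞}

lemma lintegral_mul_rpow_le_lintegral_renyiIntegrand (hN : 0 ≤ N) (ha : a ≠ ∞)
    (hf : Measurable f) (hfa : ∀ᵐ y ∂m, f y ≤ a) :
    (∫⁻ y, f y ∂m) * a ^ (-(1/N)) ≤ ∫⁻ y, renyiIntegrand N (f y) ∂m := by
  rw [← lintegral_mul_const _ hf]
  exact lintegral_mono_ae (hfa.mono fun y hy => mul_rpow_le_renyiIntegrand hN ha hy)

lemma lintegral_renyiIntegrand_le_lintegral_mul_rpow (hN : 0 ≤ N) (hb : b ≠ ∞)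
    (hf : Measurable f) (hfb : ∀ᵐ y ∂m, f y = 0 ∨ b ≤ f y) :
    ∫⁻ y, renyiIntegrand N (f y) ∂m ≤ (∫⁻ y, f y ∂m) * b ^ (-(1/N)) := by
  rw [← lintegral_mul_const _ hf]
  exact lintegral_mono_ae (hfb.mono fun y hy => renyiIntegrand_le_mul_rpow hN hb hy)

end Renyi

section RadonNikodym

variable {α : Type*} [MeasurableSpace α] {μ ν : Measure α}

/-- `Measure.eq_rnDeriv` for a finite `μ` and any `ν`, not necessarily σ-finite. -/
lemma Measure.rnDeriv_ae_eq_of_eq_add_withDensity [IsFiniteMeasure μ] {s : Measure α}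
    {f : α → ℝ≥0∞} (hf : Measurable f) (hs : s ⟂ₘ ν)
    (hadd : μ = s + ν.withDensity f) :
    μ.rnDeriv ν =ᵐ[ν] f := by
  have hfin : ∫⁻ a, f a ∂ν ≠ ∞ := by
    have hle : ν.withDensity f univ ≤ μ univ := by
      rw [hadd, Measure.add_apply]
      exact le_add_self
    rw [withDensity_apply _ MeasurableSet.univ, setLIntegral_univ] at hle
    exact ne_top_of_le_ne_top (measure_ne_top μ univ) hle
  exact ((withDensity_eq_iff hf.aemeasurable (Measure.measurable_rnDeriv μ ν).aemeasurable
    hfin).1 (Measure.eq_withDensity_rnDeriv hf hs hadd)).symm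

lemma Measure.rnDeriv_smul_restrict_ae_eq [IsFiniteMeasure μ] [μ.HaveLebesgueDecomposition ν]
    {c : ℝ≥0∞} (hc : c ≠ ∞) {A : Set α} (hA : MeasurableSet A) :
    (c • μ.restrict A).rnDeriv ν =ᵐ[ν] fun a => c * A.indicator (μ.rnDeriv ν) a := by
  have : IsFiniteMeasure (c • μ.restrict A) := Measure.smul_finite _ hc
  refine Measure.rnDeriv_ae_eq_of_eq_add_withDensity (s := c • (μ.singularPart ν).restrict A)
    (measurable_const.mul ((Measure.measurable_rnDeriv μ ν).indicator hA))
    (((Measure.mutuallySingular_singularPart μ ν).mono Measure.restrict_le_self le_rfl).smul c) ?_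
  conv_lhs => rw [μ.haveLebesgueDecomposition_add ν]
  rw [Measure.restrict_add, smul_add, restrict_withDensity hA, ← withDensity_indicator hA,
    ← withDensity_smul _ ((Measure.measurable_rnDeriv μ ν).indicator hA)]
  rfl

lemma exists_withDensity_eq_of_le_smul_restrict [IsFiniteMeasure μ] {B : Set α}
    (hBm : MeasurableSet B) (hB : ν B ≠ ∞) {a : ℝ≥0∞}
    (hle : μ ≤ a • ν.restrict B) :
    ∃ f, Measurable f ∧ (∀ᵐ y ∂ν, f y ≤ a) ∧ ν.withDensity f = μ := by
  have : IsFiniteMeasure (ν.restrict B) :=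
    ⟨by rwa [Measure.restrict_apply_univ, lt_top_iff_ne_top]⟩
  have hac : μ ≪ ν.restrict B := Measure.absolutelyContinuous_of_le_smul hle
  set g := μ.rnDeriv (ν.restrict B)
  have hg : Measurable g := Measure.measurable_rnDeriv _ _
  have hga : ∀ᵐ y ∂ν.restrict B, g y ≤ a :=
    ae_le_of_forall_setLIntegral_le_of_sigmaFinite hg fun s hs _ => by
      rw [Measure.setLIntegral_rnDeriv hac, setLIntegral_const]
      exact hle s
  refine ⟨B.indicator g, hg.indicator hBm, ?_, ?_⟩
  · filter_upwards [(ae_restrict_iff' hBm).1 hga] with y hy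
    exact Set.indicator_apply_le' hy fun _ => zero_le
  · rw [withDensity_indicator hBm, Measure.withDensity_rnDeriv_eq _ _ hac]

lemma Measure.measure_setOf_le_rnDeriv_ne_zero {C : ℝ≥0∞} (hC : C ≠ 0)
    (h : ν {y | C ≤ μ.rnDeriv ν y} ≠ 0) : μ {y | C ≤ μ.rnDeriv ν y} ≠ 0 := by
  refine fun hμ => mul_ne_zero hC h (le_antisymm ?_ zero_le)
  calc C * ν {y | C ≤ μ.rnDeriv ν y} = ∫⁻ _ in {y | C ≤ μ.rnDeriv ν y}, C ∂ν :=
        (setLIntegral_const _ C).symm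
    _ ≤ ∫⁻ y in {y | C ≤ μ.rnDeriv ν y}, μ.rnDeriv ν y ∂ν :=
        setLIntegral_mono (Measure.measurable_rnDeriv _ _) fun _ hy => hy
    _ ≤ 0 := (Measure.setLIntegral_rnDeriv_le _).trans_eq hμ

variable {N : ℝ}

lemma rpow_le_lintegral_renyiIntegrand_of_le_smul_restrict [IsProbabilityMeasure μ]
    (hN : 0 ≤ N) {B : Set α} (hBm : MeasurableSet B) (hB : ν B ≠ ∞) {a : ℝ≥0∞}
    (ha : a ≠ ∞) (hle : μ ≤ a • ν.restrict B) :
    a ^ (-(1/N)) ≤ ∫⁻ y, renyiIntegrand N (μ.rnDeriv ν y) ∂ν := by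
  obtain ⟨f, hf, hfa, hμ⟩ := exists_withDensity_eq_of_le_smul_restrict hBm hB hle
  have hrn : μ.rnDeriv ν =ᵐ[ν] f :=
    Measure.rnDeriv_ae_eq_of_eq_add_withDensity hf Measure.MutuallySingular.zero_left
      (by rw [zero_add, hμ])
  have hmass : ∫⁻ y, f y ∂ν = 1 := by
    rw [← setLIntegral_univ, ← withDensity_apply _ MeasurableSet.univ, hμ, measure_univ]
  calc a ^ (-(1/N)) = (∫⁻ y, f y ∂ν) * a ^ (-(1/N)) := by rw [hmass, one_mul]
    _ ≤ ∫⁻ y, renyiIntegrand N (f y) ∂ν :=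
      lintegral_mul_rpow_le_lintegral_renyiIntegrand hN ha hf hfa
    _ = ∫⁻ y, renyiIntegrand N (μ.rnDeriv ν y) ∂ν :=
      lintegral_congr_ae (hrn.mono fun y hy => congrArg (renyiIntegrand N) hy.symm)

lemma lintegral_renyiIntegrand_smul_restrict_le [IsFiniteMeasure μ]
    [μ.HaveLebesgueDecomposition ν] (hN : 0 ≤ N) {c C : ℝ≥0∞} (hc : c ≠ ∞) (hC : C ≠ ∞)
    {A : Set α} (hA : MeasurableSet A) (hCA : ∀ y ∈ A, C ≤ μ.rnDeriv ν y) :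
    ∫⁻ y, renyiIntegrand N ((c • μ.restrict A).rnDeriv ν y) ∂ν ≤
      (c * μ A) * (c * C) ^ (-(1/N)) := by
  have hlevel : ∀ᵐ y ∂ν, (c • μ.restrict A).rnDeriv ν y = 0 ∨
      c * C ≤ (c • μ.restrict A).rnDeriv ν y := by
    filter_upwards [Measure.rnDeriv_smul_restrict_ae_eq (μ := μ) (ν := ν) hc hA] with y hy
    rw [hy]
    by_cases hyA : y ∈ A
    · exact .inr (by rw [Set.indicator_of_mem hyA]; exact mul_le_mul_right (hCA y hyA) c)
    · exact .inl (by rw [Set.indicator_of_notMem hyA, mul_zero])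
  refine (lintegral_renyiIntegrand_le_lintegral_mul_rpow hN (ENNReal.mul_ne_top hc hC)
    (Measure.measurable_rnDeriv _ _) hlevel).trans (mul_le_mul_left ?_ _)
  refine Measure.lintegral_rnDeriv_le.trans_eq ?_
  rw [Measure.smul_apply, Measure.restrict_apply_univ, smul_eq_mul]

end RadonNikodym

lemma exists_lt_measure_setOf_le_ne_zero {α : Type*} [MeasurableSpace α] {μ : Measure α}
    {f : α → ℝ≥0∞} {C : ℝ≥0∞} (hC : C ≠ ∞) (h : μ {y | C < f y} ≠ 0) :
    ∃ C', C < C' ∧ C' ≠ ∞ ∧ μ {y | C' ≤ f y} ≠ 0 := by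
  obtain ⟨u, -, hu, hlim⟩ := exists_seq_strictAnti_tendsto' (lt_top_iff_ne_top.2 hC)
  by_contra! hnull
  refine h (measure_mono_null (fun y hy => ?_)
    (measure_iUnion_null fun n => hnull (u n) (hu n).1 (hu n).2.ne))
  obtain ⟨n, hn⟩ := (hlim.eventually (gt_mem_nhds hy)).exists
  exact mem_iUnion.2 ⟨n, hn.le⟩

section DisplacementConvexity

variable {X : Type*} [MetricSpace X] [MeasurableSpace X] {m : Measure X} {N : ℝ}

lemma StronglyDisplacementConvex.ofReal_one_sub_mul_le
    (hsdc : StronglyDisplacementConvex (renyiEntropy N m)) {Γ : ℝ → Measure X}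
    (hΓ : IsW2Geodesic Γ) {t : ℝ} (ht : t ∈ Icc (0:ℝ) 1) :
    ENNReal.ofReal (1 - t) * ∫⁻ y, renyiIntegrand N ((Γ 0).rnDeriv m y) ∂m ≤
      ∫⁻ y, renyiIntegrand N ((Γ t).rnDeriv m y) ∂m := by
  have hconv := hsdc Γ hΓ t ht
  simp only [renyiEntropy] at hconv
  have hlast : ((t:ℝ):EReal) *
      -((∫⁻ y, renyiIntegrand N ((Γ 1).rnDeriv m y) ∂m : ℝ≥0∞) : EReal) ≤ 0 := by
    rw [mul_neg]
    exact EReal.neg_le_zero.2 (mul_nonneg (by exact_mod_cast ht.1) (EReal.coe_ennreal_nonneg _))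
  rw [← EReal.coe_ennreal_le_coe_ennreal_iff, ← EReal.neg_le_neg_iff, EReal.coe_ennreal_mul,
    EReal.coe_ennreal_ofReal, max_eq_left (sub_nonneg.2 ht.2), ← mul_neg]
  exact hconv.trans (add_le_of_nonpos_right hlast)

variable [OpensMeasurableSpace X]

lemma IsGeoOpt.isW2Geodesic_smul_restrict {μ₀ : Measure X} {x : X} {r : ℝ}
    {π : Measure (ℝ → X)} (hπ : IsGeoOpt μ₀ (Measure.dirac x) π)
    (hμ₀ : ∀ᵐ y ∂μ₀, dist y x ≤ r) {G : Set (ℝ → X)} (hG : π G ≠ 0) :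
    IsW2Geodesic fun s => ((π G)⁻¹ • π.restrict G).map (evalGeo s) := by
  obtain ⟨hprob, hgeo, h₀, h₁, -⟩ := hπ
  have hac : (π G)⁻¹ • π.restrict G ≪ π :=
    Measure.smul_absolutelyContinuous.trans
      (Measure.absolutelyContinuous_of_le Measure.restrict_le_self)
  have : IsProbabilityMeasure ((π G)⁻¹ • π.restrict G) := ⟨by
    rw [Measure.smul_apply, Measure.restrict_apply_univ, smul_eq_mul,
      ENNReal.inv_mul_cancel hG (measure_ne_top π G)]⟩
  have hend : ∀ᵐ γ ∂π, γ 1 = x :=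
    ae_of_ae_map (p := fun y => y = x) (measurable_evalGeo 1).aemeasurable
      (h₁ ▸ (ae_dirac_iff (p := fun y => y = x) (measurableSet_singleton x)).2 rfl)
  have hstart : ∀ᵐ γ ∂π, edist (γ 0) x ^ 2 ≤ ENNReal.ofReal r ^ 2 :=
    (ae_of_ae_map (p := fun y => dist y x ≤ r) (measurable_evalGeo 0).aemeasurable
      (h₀ ▸ hμ₀)).mono fun γ hγ => by
        rw [edist_dist]
        exact pow_le_pow_left₀ zero_le (ENNReal.ofReal_le_ofReal hγ) 2
  refine isW2Geodesic_map_evalGeo (hac.ae_le hgeo) (hac.ae_le hend)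
    (ne_top_of_le_ne_top ?_ (lintegral_mono_ae (hac.ae_le hstart)))
  rw [lintegral_const, measure_univ, mul_one]
  exact ENNReal.pow_ne_top ENNReal.ofReal_ne_top

/-- The level-set form of the density bound `ρ_t ≤ (1 - t)^{-N} / m(B)`. -/
theorem StronglyDisplacementConvex.ofReal_one_sub_rpow_mul_le_inv_measure (hN : 0 < N)
    (hsdc : StronglyDisplacementConvex (renyiEntropy N m)) {x : X} {r : ℝ} {B : Set X}
    (hBm : MeasurableSet B) (hBr : B ⊆ ball x r) (hB : m B ≠ ∞) {π : Measure (ℝ → X)}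
    (hπ : IsGeoOpt ((m B)⁻¹ • m.restrict B) (Measure.dirac x) π) {t : ℝ}
    (ht : t ∈ Icc (0:ℝ) 1)
    [(π.map (evalGeo t)).HaveLebesgueDecomposition m] {C : ℝ≥0∞} (hC : C ≠ ∞)
    (hA : m {y | C ≤ (π.map (evalGeo t)).rnDeriv m y} ≠ 0) :
    ENNReal.ofReal (1 - t) ^ N * C ≤ (m B)⁻¹ := by
  rcases eq_or_ne (m B) 0 with hB₀ | hB₀
  · simp [hB₀]
  rcases eq_or_ne C 0 with rfl | hC₀
  · simp
  have : IsProbabilityMeasure π := hπ.1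
  set μt := π.map (evalGeo t)
  set A := {y | C ≤ μt.rnDeriv m y}
  have hAm : MeasurableSet A := measurableSet_le measurable_const (Measure.measurable_rnDeriv _ _)
  set p := μt A
  have hp₀ : p ≠ 0 := Measure.measure_setOf_le_rnDeriv_ne_zero hC₀ hA
  have hp : p ≠ ∞ := measure_ne_top _ _
  have hπG : π (evalGeo t ⁻¹' A) = p := (Measure.map_apply (measurable_evalGeo t) hAm).symm
  set π' := p⁻¹ • π.restrict (evalGeo t ⁻¹' A)
  have hΓ : IsW2Geodesic fun s => π'.map (evalGeo s) := by
    have hΓ := hπ.isW2Geodesic_smul_restrict (r := r)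
      ((Measure.ae_smul_measure (ae_restrict_mem hBm) _).mono fun y hy => (mem_ball.1 (hBr hy)).le)
      (hπG ▸ hp₀)
    rwa [hπG] at hΓ
  have : IsProbabilityMeasure (π'.map (evalGeo 0)) := hΓ.1 0 ⟨le_rfl, zero_le_one⟩
  have h₀ : π'.map (evalGeo 0) ≤ (p⁻¹ * (m B)⁻¹) • m.restrict B := by
    rw [Measure.map_smul, ← smul_smul, ← hπ.2.2.1]
    exact smul_le_smul_left _ (Measure.map_mono Measure.restrict_le_self (measurable_evalGeo 0))
  have hₜ : π'.map (evalGeo t) = p⁻¹ • μt.restrict A := by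
    rw [Measure.map_smul, Measure.restrict_map (measurable_evalGeo t) hAm]
  have hI₀ := rpow_le_lintegral_renyiIntegrand_of_le_smul_restrict hN.le hBm hB
    (ENNReal.mul_ne_top (ENNReal.inv_ne_top.2 hp₀) (ENNReal.inv_ne_top.2 hB₀)) h₀
  have hIₜ := lintegral_renyiIntegrand_smul_restrict_le hN.le (ENNReal.inv_ne_top.2 hp₀) hC hAm
    fun y hy => hy
  rw [← hₜ, ENNReal.inv_mul_cancel hp₀ hp, one_mul] at hIₜ
  exact ENNReal.rpow_mul_le_of_mul_rpow_neg_le hN hp₀ hp (ENNReal.inv_ne_zero.2 hB)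
    (ENNReal.inv_ne_top.2 hB₀) (((mul_le_mul_right hI₀ _).trans
      (hsdc.ofReal_one_sub_mul_le hΓ ht)).trans hIₜ)

end DisplacementConvexity

theorem renyi_sdc_density_bound_to_dirac_general
    {X : Type*} [MetricSpace X] [MeasurableSpace X] [BorelSpace X]
    (m : Measure X)
    {N : ℝ} (hN : 1 ≤ N) (hsdc : StronglyDisplacementConvex (renyiEntropy N m))
    (x : X) (r : ℝ)
    (hB0 : 0 < m (Metric.ball x r)) (hBfin : m (Metric.ball x r) ≠ ∞)
    (Bp : Set X) (hBpmeas : MeasurableSet Bp) (hBpsub : Bp ⊆ Metric.ball x r)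
    (hBphalf : m Bp = m (Metric.ball x r) / 2)
    (π : Measure (ℝ → X))
    (hπ : IsGeoOpt ((m Bp)⁻¹ • m.restrict Bp) (Measure.dirac x) π) :
    ∀ t ∈ Set.Icc (0:ℝ) (1/2),
      ∀ᵐ y ∂m, (π.map (evalGeo t)).rnDeriv m y ≤
        ENNReal.ofReal ((2:ℝ) ^ (N + 1)) / m (Metric.ball x r) := by
  intro t ht
  by_cases hLeb : (π.map (evalGeo t)).HaveLebesgueDecomposition m
  swap
  · simp [Measure.rnDeriv_of_not_haveLebesgueDecomposition hLeb]
  have hN₀ : 0 < N := zero_lt_one.trans_le hN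
  have hC : ENNReal.ofReal ((2:ℝ) ^ (N + 1)) / m (ball x r) ≠ ∞ :=
    ENNReal.div_ne_top ENNReal.ofReal_ne_top hB0.ne'
  by_contra hbad
  obtain ⟨C', hCC', hC', hA⟩ :=
    exists_lt_measure_setOf_le_ne_zero hC (by simpa [ae_iff] using hbad)
  have hlevel := hsdc.ofReal_one_sub_rpow_mul_le_inv_measure hN₀ hBpmeas hBpsub
    (hBphalf ▸ ENNReal.div_ne_top hBfin two_ne_zero) hπ ⟨ht.1, ht.2.trans (by norm_num)⟩
    hC' hA
  have hhalf : (2 ^ N)⁻¹ ≤ ENNReal.ofReal (1 - t) ^ N := by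
    rw [← ENNReal.inv_rpow, ← ENNReal.ofReal_ofNat 2, ← ENNReal.ofReal_inv_of_pos two_pos]
    exact ENNReal.rpow_le_rpow (ENNReal.ofReal_le_ofReal (by linarith [ht.2])) hN₀.le
  refine hCC'.not_ge ?_
  calc C' ≤ 2 ^ N * (m Bp)⁻¹ :=
        (ENNReal.inv_mul_le_iff (by positivity) (by finiteness)).1
          ((mul_le_mul_left hhalf C').trans hlevel)
    _ = ENNReal.ofReal ((2:ℝ) ^ (N + 1)) / m (ball x r) := by
        rw [hBphalf, ENNReal.inv_div (.inr hBfin) (.inr hB0.ne'), ← mul_div_assoc,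
          ← ENNReal.ofReal_rpow_of_pos two_pos, ENNReal.ofReal_ofNat,
          ENNReal.rpow_add _ _ two_ne_zero ENNReal.ofNat_ne_top, ENNReal.rpow_one]

/-- The density bound along a geodesic from a normalized half of a ball to the Dirac mass
at its center, under strong displacement convexity of `E_N`. -/
theorem renyi_sdc_density_bound_to_dirac
    {X : Type*} [MetricSpace X] [CompleteSpace X] [MeasurableSpace X] [BorelSpace X]
    (m : Measure X) (hgeo : IsGeodesicSpace X)
    (hsupp : ∀ x : X, ∀ ε > 0, 0 < m (Metric.ball x ε))
    {N : ℝ} (hN : 1 ≤ N) (hsdc : StronglyDisplacementConvex (renyiEntropy N m))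
    (x : X) (r : ℝ) (hr : 0 < r)
    (hB0 : 0 < m (Metric.ball x r)) (hBfin : m (Metric.ball x r) ≠ ∞)
    (Bp : Set X) (hBpmeas : MeasurableSet Bp) (hBpsub : Bp ⊆ Metric.ball x r)
    (hBphalf : m Bp = m (Metric.ball x r) / 2)
    (π : Measure (ℝ → X))
    (hπ : IsGeoOpt ((m Bp)⁻¹ • m.restrict Bp) (Measure.dirac x) π) :
    ∀ t ∈ Set.Icc (0:ℝ) (1/2),
      ∀ᵐ y ∂m, (π.map (evalGeo t)).rnDeriv m y ≤
        ENNReal.ofReal ((2:ℝ) ^ (N + 1)) / m (Metric.ball x r) :=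
  renyi_sdc_density_bound_to_dirac_general m hN hsdc x r hB0 hBfin Bp hBpmeas hBpsub hBphalf π hπ
end

section
/- Let N ∈ [1,∞) and let (X,d,m) be a geodesic metric measure space in which the Rényi entropy functional E_N is strongly displacement convex. Let E ⊂ X be a Borel set with 0 < m(E) < ∞, let x ∈ X be such that W₂(m(E)^{-1} m|_E, δ_x) < ∞, and let π ∈ GeoOpt(m(E)^{-1} m|_E, δ_x). For s ∈ [0,1) let ρ_s denote the density of the absolutely continuous part of (e_s)_#π with respect to m. Then ∫_X ρ_s^{1−1/N} dm ≥ (1−s)·m(E)^{1/N}, and consequently m({ρ_s > 0}) ≥ (1−s)^N m(E). -/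
open MeasureTheory Metric Set Filter ProbabilityTheory
open scoped ENNReal NNReal Topology ProbabilityTheory

/-! The initial entropy is that of the uniform distribution on `E`. Since `E_N ≤ 0`, displacement
convexity towards the Dirac mass bounds `∫ ρ_s^(1-1/N)` from below by `(1-s) m(E)^(1/N)`, while
Hölder's inequality with exponents `1 - 1/N` and `1/N`, applied to `ρ_s` and `𝟙_{ρ_s > 0}`, bounds
it from above by `(∫ ρ_s)^(1-1/N) m({ρ_s > 0})^(1/N) ≤ m({ρ_s > 0})^(1/N)`. -/

section RenyiEntropy

variable {Y : Type*} [MeasurableSpace Y]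

lemma renyiEntropy_nonpos (N : ℝ) (m μ : Measure Y) : renyiEntropy N m μ ≤ 0 :=
  EReal.neg_le_zero.2 (EReal.coe_ennreal_nonneg _)

lemma rnDeriv_smul_restrict_self (m : Measure Y) {E : Set Y} (hE : MeasurableSet E) {c : ℝ≥0∞}
    (hc : c * m E ≠ ∞) :
    (c • m.restrict E).rnDeriv m =ᵐ[m] E.indicator (fun _ => c) := by
  have hf : Measurable (E.indicator fun _ => c) := measurable_const.indicator hE
  have hwd : c • m.restrict E = 0 + m.withDensity (E.indicator fun _ => c) := by
    rw [zero_add, withDensity_indicator hE, withDensity_const]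
  have hint : ∫⁻ y, E.indicator (fun _ => c) y ∂m ≠ ∞ := by
    rwa [lintegral_indicator hE, setLIntegral_const]
  exact ((withDensity_eq_iff hf.aemeasurable (Measure.measurable_rnDeriv _ _).aemeasurable hint).mp
    (Measure.eq_withDensity_rnDeriv hf Measure.MutuallySingular.zero_left hwd)).symm

lemma lintegral_renyiIntegrand_normalized_restrict (m : Measure Y) {E : Set Y}
    (hE : MeasurableSet E) (hE0 : m E ≠ 0) (hEfin : m E ≠ ∞) (N : ℝ) :
    ∫⁻ y, renyiIntegrand N (((m E)⁻¹ • m.restrict E).rnDeriv m y) ∂m = m E ^ (1 / N) := by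
  have hdens := rnDeriv_smul_restrict_self m hE (c := (m E)⁻¹)
    (by rw [ENNReal.inv_mul_cancel hE0 hEfin]; exact ENNReal.one_ne_top)
  have hpow : ∀ y, renyiIntegrand N (E.indicator (fun _ => (m E)⁻¹) y)
      = E.indicator (fun _ => m E ^ (1 / N - 1)) y := by
    intro y
    by_cases hy : y ∈ E
    · simp [renyiIntegrand, hy, hEfin, ← ENNReal.rpow_neg_one, ← ENNReal.rpow_mul]
    · simp [renyiIntegrand, hy]
  calc ∫⁻ y, renyiIntegrand N (((m E)⁻¹ • m.restrict E).rnDeriv m y) ∂m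
      = ∫⁻ y, E.indicator (fun _ => m E ^ (1 / N - 1)) y ∂m :=
        (lintegral_congr_ae (hdens.fun_comp (renyiIntegrand N))).trans (lintegral_congr hpow)
    _ = m E ^ (1 / N) := by
        rw [lintegral_indicator hE, setLIntegral_const]
        nth_rewrite 2 [← ENNReal.rpow_one (m E)]
        rw [← ENNReal.rpow_add _ _ hE0 hEfin, sub_add_cancel]

lemma lintegral_renyiIntegrand_le (m : Measure Y) {ρ : Y → ℝ≥0∞} (hρ : Measurable ρ) {N : ℝ}
    (hN : 1 ≤ N) :
    ∫⁻ y, renyiIntegrand N (ρ y) ∂m ≤ (∫⁻ y, ρ y ∂m) ^ (1 - 1 / N) * m {y | 0 < ρ y} ^ (1 / N) := by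
  have hN0 : 0 < N := one_pos.trans_le hN
  set S := {y | 0 < ρ y}
  have hS : MeasurableSet S := measurableSet_lt measurable_const hρ
  have hsplit : ∀ y, renyiIntegrand N (ρ y) = ρ y ^ (1 - 1 / N) * S.indicator 1 y ^ (1 / N) := by
    intro y
    by_cases hy : ρ y = 0
    · simp [renyiIntegrand, S, hy, hN0]
    · simp [renyiIntegrand, S, hy, pos_iff_ne_zero]
  calc ∫⁻ y, renyiIntegrand N (ρ y) ∂m
      = ∫⁻ y, ρ y ^ (1 - 1 / N) * S.indicator 1 y ^ (1 / N) ∂m := lintegral_congr hsplit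
    _ ≤ (∫⁻ y, ρ y ∂m) ^ (1 - 1 / N) * (∫⁻ y, S.indicator 1 y ∂m) ^ (1 / N) :=
        ENNReal.lintegral_mul_norm_pow_le hρ.aemeasurable
          (measurable_one.indicator hS).aemeasurable
          (sub_nonneg.2 ((div_le_one₀ hN0).2 hN)) (by positivity) (sub_add_cancel _ _)
    _ = (∫⁻ y, ρ y ∂m) ^ (1 - 1 / N) * m S ^ (1 / N) := by rw [lintegral_indicator_one hS]

lemma lintegral_renyiIntegrand_rnDeriv_le (m μ : Measure Y) [IsProbabilityMeasure μ] {N : ℝ}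
    (hN : 1 ≤ N) :
    ∫⁻ y, renyiIntegrand N (μ.rnDeriv m y) ∂m ≤ m {y | 0 < μ.rnDeriv m y} ^ (1 / N) := by
  have hmass : (∫⁻ y, μ.rnDeriv m y ∂m) ^ (1 - 1 / N) ≤ 1 := by
    exact ENNReal.rpow_le_one (measure_univ (μ := μ) ▸ Measure.lintegral_rnDeriv_le)
      (sub_nonneg.2 ((div_le_one₀ (one_pos.trans_le hN)).2 hN))
  calc ∫⁻ y, renyiIntegrand N (μ.rnDeriv m y) ∂m
      ≤ (∫⁻ y, μ.rnDeriv m y ∂m) ^ (1 - 1 / N) * m {y | 0 < μ.rnDeriv m y} ^ (1 / N) :=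
        lintegral_renyiIntegrand_le m (Measure.measurable_rnDeriv μ m) hN
    _ ≤ m {y | 0 < μ.rnDeriv m y} ^ (1 / N) := mul_le_of_le_one_left' hmass

end RenyiEntropy

section DisplacementConvexity

variable {X : Type*} [MetricSpace X] [MeasurableSpace X]

lemma StronglyDisplacementConvex.lintegral_renyiIntegrand_ge {N : ℝ} {m : Measure X}
    (hsdc : StronglyDisplacementConvex (renyiEntropy N m)) {Γ : ℝ → Measure X}
    (hΓ : IsW2Geodesic Γ) {s : ℝ} (hs : s ∈ Set.Icc (0 : ℝ) 1) :
    ENNReal.ofReal (1 - s) * ∫⁻ y, renyiIntegrand N ((Γ 0).rnDeriv m y) ∂m ≤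
      ∫⁻ y, renyiIntegrand N ((Γ s).rnDeriv m y) ∂m := by
  have hend : ((s : ℝ) : EReal) * renyiEntropy N m (Γ 1) ≤ 0 :=
    mul_nonpos_of_nonneg_of_nonpos (EReal.coe_nonneg.2 hs.1) (renyiEntropy_nonpos N m _)
  have hconv := (hsdc Γ hΓ s hs).trans (add_le_of_nonpos_right hend)
  have hcoef : ((1 - s : ℝ) : EReal) = ((ENNReal.ofReal (1 - s) : ℝ≥0∞) : EReal) := by
    rw [EReal.coe_ennreal_ofReal, max_eq_left (sub_nonneg.2 hs.2)]
  rw [renyiEntropy, renyiEntropy, mul_neg, hcoef, ← EReal.coe_ennreal_mul, EReal.neg_le_neg_iff,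
    EReal.coe_ennreal_le_coe_ennreal_iff] at hconv
  exact hconv

end DisplacementConvexity

lemma ENNReal.ofReal_rpow_mul_le_of_mul_rpow_one_div_le {a b : ℝ≥0∞} {t N : ℝ} (ht : 0 ≤ t)
    (hN : 0 < N) (h : ENNReal.ofReal t * a ^ (1 / N) ≤ b ^ (1 / N)) :
    ENNReal.ofReal (t ^ N) * a ≤ b := by
  rwa [← ENNReal.rpow_le_rpow_iff (one_div_pos.2 hN),
    ENNReal.mul_rpow_of_nonneg _ _ (by positivity), ← ENNReal.ofReal_rpow_of_nonneg ht hN.le, ← ENNReal.rpow_mul, mul_one_div_cancel hN.ne',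
    ENNReal.rpow_one]

theorem renyi_sdc_entropy_lower_bound_to_dirac_general
    {X : Type*} [MetricSpace X] [MeasurableSpace X]
    (m : Measure X)
    {N : ℝ} (hN : 1 ≤ N) (hsdc : StronglyDisplacementConvex (renyiEntropy N m))
    (E : Set X) (hEmeas : MeasurableSet E) (hE0 : 0 < m E) (hEfin : m E ≠ ∞)
    (x : X)
    (π : Measure (ℝ → X))
    (hπ : IsGeoOpt ((m E)⁻¹ • m.restrict E) (Measure.dirac x) π)
    (s : ℝ) (hs : s ∈ Set.Ico (0:ℝ) 1) :
    ENNReal.ofReal (1 - s) * m E ^ (1/N : ℝ) ≤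
        ∫⁻ y, renyiIntegrand N ((π.map (evalGeo s)).rnDeriv m y) ∂m ∧
      ENNReal.ofReal ((1 - s) ^ N) * m E ≤
        m {y : X | 0 < (π.map (evalGeo s)).rnDeriv m y} := by
  obtain ⟨-, -, hπ0, -, hΓ⟩ := hπ
  have hs' : s ∈ Set.Icc (0 : ℝ) 1 := Set.Ico_subset_Icc_self hs
  have hentropy : ENNReal.ofReal (1 - s) * m E ^ (1 / N) ≤
      ∫⁻ y, renyiIntegrand N ((π.map (evalGeo s)).rnDeriv m y) ∂m := by
    simpa only [hπ0, lintegral_renyiIntegrand_normalized_restrict m hEmeas hE0.ne' hEfin] using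
      hsdc.lintegral_renyiIntegrand_ge hΓ hs'
  have := hΓ.1 s hs'
  exact ⟨hentropy, ENNReal.ofReal_rpow_mul_le_of_mul_rpow_one_div_le (sub_nonneg.2 hs.2.le)
    (one_pos.trans_le hN) (hentropy.trans (lintegral_renyiIntegrand_rnDeriv_le m _ hN))⟩

/-- Entropy and support estimates along a geodesic from a normalized set to a Dirac mass,
under strong displacement convexity of `E_N`. -/
theorem renyi_sdc_entropy_lower_bound_to_dirac
    {X : Type*} [MetricSpace X] [CompleteSpace X] [MeasurableSpace X] [BorelSpace X]
    (m : Measure X) (hgeo : IsGeodesicSpace X)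
    (hsupp : ∀ x : X, ∀ ε > 0, 0 < m (Metric.ball x ε))
    {N : ℝ} (hN : 1 ≤ N) (hsdc : StronglyDisplacementConvex (renyiEntropy N m))
    (E : Set X) (hEmeas : MeasurableSet E) (hE0 : 0 < m E) (hEfin : m E ≠ ∞)
    (x : X) (hW : W2 ((m E)⁻¹ • m.restrict E) (Measure.dirac x) ≠ ∞)
    (π : Measure (ℝ → X))
    (hπ : IsGeoOpt ((m E)⁻¹ • m.restrict E) (Measure.dirac x) π)
    (s : ℝ) (hs : s ∈ Set.Ico (0:ℝ) 1) :
    ENNReal.ofReal (1 - s) * m E ^ (1/N : ℝ) ≤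
        ∫⁻ y, renyiIntegrand N ((π.map (evalGeo s)).rnDeriv m y) ∂m ∧
      ENNReal.ofReal ((1 - s) ^ N) * m E ≤
        m {y : X | 0 < (π.map (evalGeo s)).rnDeriv m y} :=
  renyi_sdc_entropy_lower_bound_to_dirac_general m hN hsdc E hEmeas hE0 hEfin x π hπ s hs
end

section
/- Let (X, 𝒜, m) be a measure space with m nonatomic, let B ∈ 𝒜 with 0 < m(B) < ∞, and let u : X → ℝ be measurable. Set M = inf{a ∈ ℝ : m(B ∩ {u > a}) ≤ m(B)/2}. Then there exist disjoint measurable sets B⁺, B⁻ with B⁺ ∪ B⁻ = B, m(B⁺) = m(B⁻) = m(B)/2, and u(x) ≤ M ≤ u(y) for all x ∈ B⁻ and all y ∈ B⁺. -/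
open MeasureTheory Metric Set Filter ProbabilityTheory
open scoped ENNReal NNReal Topology ProbabilityTheory

/-! The sets `B ∩ {u > M}` and `B ∩ {u ≥ M}` have measure at most and at least `m(B)/2`, by
continuity of the measure along `{u > a}` as `a ↓ M` and `a ↑ M`. By Sierpiński's theorem a
nonatomic measure takes every intermediate value on sets squeezed between the two, so `B⁺` is
`B ∩ {u > M}` together with a suitable part of the level set `B ∩ {u = M}`, and `B⁻ = B \ B⁺`.

Sierpiński's theorem is proved greedily, each step adding a piece of at least half the largest
admissible measure. -/

namespace MeasureTheory

variable {Y : Type*} [MeasurableSpace Y]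

def Measure.IsNonatomic (m : Measure Y) : Prop :=
  ∀ A : Set Y, MeasurableSet A → 0 < m A →
    ∃ A' : Set Y, MeasurableSet A' ∧ A' ⊆ A ∧ 0 < m A' ∧ m A' < m A

lemma _root_.ENNReal.exists_forall_le_two_mul {ι : Type*} [Nonempty ι] {f : ι → ℝ≥0∞}
    (hf : ⨆ i, f i ≠ ∞) : ∃ i, ∀ j, f j ≤ 2 * f i := by
  rcases eq_or_ne (⨆ i, f i) 0 with h0 | h0
  · exact ⟨Classical.arbitrary ι, fun j => by simp [(ENNReal.iSup_eq_zero.1 h0) j]⟩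
  obtain ⟨i, hi⟩ := lt_iSup_iff.1 (ENNReal.half_lt_self h0 hf)
  refine ⟨i, fun j => (le_iSup f j).trans ?_⟩
  rw [mul_comm]
  exact (ENNReal.div_le_iff (by norm_num) (by norm_num)).1 hi.le

lemma Measure.exists_subset_diff_forall_le_two_mul (m : Measure Y) (A S : Set Y) {c : ℝ≥0∞}
    (hc : c ≠ ∞) :
    ∃ T, MeasurableSet T ∧ T ⊆ A \ S ∧ (m S ≤ c → m (S ∪ T) ≤ c) ∧
      ∀ T', MeasurableSet T' → T' ⊆ A \ S → m (S ∪ T') ≤ c → m T' ≤ 2 * m T := by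
  by_cases hS : m S ≤ c
  · let ι := {T : Set Y // MeasurableSet T ∧ T ⊆ A \ S ∧ m (S ∪ T) ≤ c}
    have : Nonempty ι := ⟨⟨∅, .empty, empty_subset _, by simpa using hS⟩⟩
    have hsup : ⨆ T : ι, m T ≠ ∞ :=
      ne_top_of_le_ne_top hc (iSup_le fun T => (measure_mono subset_union_right).trans T.2.2.2)
    obtain ⟨⟨T, hTm, hTA, hTc⟩, hmax⟩ := ENNReal.exists_forall_le_two_mul hsup
    exact ⟨T, hTm, hTA, fun _ => hTc, fun T' hT'm hT'A hT'c => hmax ⟨T', hT'm, hT'A, hT'c⟩⟩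
  · refine ⟨∅, .empty, empty_subset _, fun h => absurd h hS, fun T' _ _ hT'c => ?_⟩
    exact absurd ((measure_mono subset_union_left).trans hT'c) hS

namespace Measure.IsNonatomic

variable {m : Measure Y}

lemma exists_subset_two_mul_le (hm : m.IsNonatomic) {T : Set Y} (hT : MeasurableSet T)
    (h0 : 0 < m T) :
    ∃ T' ⊆ T, MeasurableSet T' ∧ 0 < m T' ∧ 2 * m T' ≤ m T := by
  obtain ⟨A, hAm, hAT, hA0, hAT'⟩ := hm T hT h0
  have hsum : m A + m (T \ A) = m T := by
    rw [measure_add_sdiff hAm.nullMeasurableSet, union_eq_self_of_subset_left hAT]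
  have hdiff0 : 0 < m (T \ A) := by
    refine pos_iff_ne_zero.2 fun h => hAT'.ne ?_
    rw [← hsum, h, add_zero]
  rcases le_total (m A) (m (T \ A)) with h | h
  · exact ⟨A, hAT, hAm, hA0, by rw [two_mul, ← hsum]; gcongr⟩
  · exact ⟨T \ A, sdiff_subset, hT.diff hAm, hdiff0, by rw [two_mul, ← hsum]; gcongr⟩

lemma exists_subset_measure_pos_le (hm : m.IsNonatomic) {R : Set Y} (hR : MeasurableSet R)
    (h0 : 0 < m R) (hfin : m R ≠ ∞) {ε : ℝ≥0∞} (hε : 0 < ε) :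
    ∃ T ⊆ R, MeasurableSet T ∧ 0 < m T ∧ m T ≤ ε := by
  by_contra! H
  let 𝒮 : Set (Set Y) := {T | T ⊆ R ∧ MeasurableSet T ∧ 0 < m T}
  set δ := ⨅ T ∈ 𝒮, m T
  have hεδ : ε ≤ δ := le_iInf₂ fun T hT => (H T hT.1 hT.2.1 hT.2.2).le
  have hδfin : δ ≠ ∞ := ne_top_of_le_ne_top hfin (biInf_le _ ⟨subset_rfl, hR, h0⟩)
  obtain ⟨T, ⟨hTR, hTm, hT0⟩, hTδ⟩ : ∃ T ∈ 𝒮, m T < 2 * δ := by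
    have : δ < 2 * δ := two_mul δ ▸ ENNReal.lt_add_right hδfin (hε.trans_le hεδ).ne'
    simpa only [δ, iInf_lt_iff, exists_prop] using this
  obtain ⟨T', hT'T, hT'm, hT'0, hT'⟩ := hm.exists_subset_two_mul_le hTm hT0
  have : δ ≤ m T' := biInf_le _ ⟨hT'T.trans hTR, hT'm, hT'0⟩
  exact (hTδ.trans_le (by gcongr)).not_ge hT'

theorem exists_subset_measure_eq (hm : m.IsNonatomic) {A : Set Y} (hA : MeasurableSet A)
    (hAfin : m A ≠ ∞) {c : ℝ≥0∞} (hc : c ≤ m A) :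
    ∃ F ⊆ A, MeasurableSet F ∧ m F = c := by
  have hcfin : c ≠ ∞ := ne_top_of_le_ne_top hAfin hc
  choose T hTm hTA hTc hTmax using fun S => m.exists_subset_diff_forall_le_two_mul A S hcfin
  let g : ℕ → Set Y := fun n => (fun S => S ∪ T S)^[n] ∅
  have g_succ (n : ℕ) : g (n + 1) = g n ∪ T (g n) := Function.iterate_succ_apply' _ _ _
  have g_mono : Monotone g := monotone_nat_of_le_succ fun n => g_succ n ▸ subset_union_left
  have g_spec (n : ℕ) : MeasurableSet (g n) ∧ g n ⊆ A ∧ m (g n) ≤ c := by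
    induction n with
    | zero => simp [g]
    | succ n ih =>
      rw [g_succ]
      exact ⟨ih.1.union (hTm _), union_subset ih.2.1 ((hTA _).trans sdiff_subset),
        hTc _ ih.2.2⟩
  have hFc : m (⋃ n, g n) ≤ c := by
    rw [g_mono.measure_iUnion]
    exact iSup_le fun n => (g_spec n).2.2
  refine ⟨⋃ n, g n, iUnion_subset fun n => (g_spec n).2.1, .iUnion fun n => (g_spec n).1,
    hFc.antisymm (not_lt.1 fun hlt => ?_)⟩
  -- A piece `T₀` that still fits after every step forces each greedy step to add `m T₀ / 2`.
  have hrest : 0 < m (A \ ⋃ n, g n) :=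
    (tsub_pos_of_lt (hlt.trans_le hc)).trans_le le_measure_sdiff
  obtain ⟨T₀, hT₀, hT₀m, hT₀0, hT₀c⟩ := hm.exists_subset_measure_pos_le
    (hA.diff (.iUnion fun n => (g_spec n).1)) hrest
    (ne_top_of_le_ne_top hAfin (measure_mono sdiff_subset)) (tsub_pos_of_lt hlt)
  have grow (n : ℕ) : n * m T₀ ≤ 2 * m (g n) := by
    induction n with
    | zero => simp [g]
    | succ n ih =>
      have hfit : m T₀ ≤ 2 * m (T (g n)) := by
        refine hTmax _ T₀ hT₀m (hT₀.trans (sdiff_subset_sdiff_right (subset_iUnion g n))) ?_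
        calc m (g n ∪ T₀) ≤ m (⋃ n, g n) + (c - m (⋃ n, g n)) :=
              (measure_union_le _ _).trans (add_le_add (measure_mono (subset_iUnion g n)) hT₀c)
          _ = c := add_tsub_cancel_of_le hlt.le
      rw [g_succ, measure_union (disjoint_sdiff_right.mono_right (hTA _)) (hTm _)]
      push_cast
      rw [add_mul, one_mul, mul_add]
      exact add_le_add ih hfit
  obtain ⟨n, hn⟩ := ENNReal.exists_nat_mul_gt hT₀0.ne'
    (ENNReal.mul_ne_top ENNReal.ofNat_ne_top hcfin : 2 * c ≠ ∞)
  exact hn.not_ge ((grow n).trans (by gcongr; exact (g_spec n).2.2))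

theorem exists_between_measure_eq (hm : m.IsNonatomic) {P Q : Set Y} (hP : MeasurableSet P)
    (hQ : MeasurableSet Q) (hPQ : P ⊆ Q) (hQfin : m Q ≠ ∞) {c : ℝ≥0∞} (hPc : m P ≤ c)
    (hcQ : c ≤ m Q) :
    ∃ R, P ⊆ R ∧ R ⊆ Q ∧ MeasurableSet R ∧ m R = c := by
  have hdiff : m (Q \ P) = m Q - m P :=
    measure_sdiff hPQ hP.nullMeasurableSet (ne_top_of_le_ne_top hQfin (measure_mono hPQ))
  obtain ⟨F, hFQ, hFm, hF⟩ := hm.exists_subset_measure_eq (hQ.diff hP)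
    (ne_top_of_le_ne_top hQfin (measure_mono sdiff_subset)) (hdiff ▸ tsub_le_tsub_right hcQ _)
  refine ⟨P ∪ F, subset_union_left, union_subset hPQ (hFQ.trans sdiff_subset), hP.union hFm, ?_⟩
  rw [measure_union (disjoint_sdiff_right.mono_right hFQ) hFm, hF, add_tsub_cancel_of_le hPc]

end Measure.IsNonatomic

section TailQuantile

variable (ν : Measure ℝ) {h : ℝ≥0∞}

noncomputable def tailQuantile (h : ℝ≥0∞) : ℝ := sInf {a | ν (Ioi a) ≤ h}

lemma nonempty_setOf_measure_Ioi_le [IsFiniteMeasure ν] (hh : 0 < h) :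
    {a : ℝ | ν (Ioi a) ≤ h}.Nonempty := by
  have hempty : ⋂ a : ℝ, Ioi a = ∅ := iInter_eq_empty_iff.2 fun x => ⟨x, lt_irrefl x⟩
  have : Tendsto (fun a => ν (Ioi a)) atTop (𝓝 0) := by
    simpa [hempty, Function.comp_def] using tendsto_measure_iInter_atTop (μ := ν)
      (fun a => measurableSet_Ioi.nullMeasurableSet) antitone_Ioi ⟨0, measure_ne_top ν _⟩
  obtain ⟨a, ha⟩ := (this.eventually (gt_mem_nhds hh)).exists
  exact ⟨a, ha.le⟩

lemma bddBelow_setOf_measure_Ioi_le (hh : h < ν univ) : BddBelow {a : ℝ | ν (Ioi a) ≤ h} := by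
  have : Tendsto (fun a => ν (Ioi a)) atBot (𝓝 (ν univ)) := by
    simpa [Function.comp_def] using tendsto_measure_iUnion_atBot (μ := ν) antitone_Ioi
  obtain ⟨a₀, ha₀⟩ := eventually_atBot.1 (this.eventually (lt_mem_nhds hh))
  exact ⟨a₀, fun a ha => le_of_not_gt fun hlt => (ha₀ a hlt.le).not_ge ha⟩

lemma measure_Ioi_tailQuantile_le [IsFiniteMeasure ν] (hh : 0 < h) :
    ν (Ioi (tailQuantile ν h)) ≤ h := by
  obtain ⟨x, hx_anti, hx_gt, hx_lim⟩ := exists_seq_strictAnti_tendsto (tailQuantile ν h)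
  have hmono : Monotone fun n => Ioi (x n) := fun i j hij => Ioi_subset_Ioi (hx_anti.antitone hij)
  rw [← (isGLB_of_tendsto_atTop hx_anti.antitone hx_lim).iUnion_Ioi_eq, hmono.measure_iUnion]
  refine iSup_le fun n => ?_
  obtain ⟨a, ha, hax⟩ := exists_lt_of_csInf_lt (nonempty_setOf_measure_Ioi_le ν hh) (hx_gt n)
  exact (measure_mono (Ioi_subset_Ioi hax.le)).trans ha

lemma le_measure_Ici_tailQuantile [IsFiniteMeasure ν] (hh : h < ν univ) :
    h ≤ ν (Ici (tailQuantile ν h)) := by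
  obtain ⟨y, hy_mono, hy_lt, hy_lim⟩ := exists_seq_strictMono_tendsto (tailQuantile ν h)
  have hIci : Ici (tailQuantile ν h) = ⋂ n, Ioi (y n) := by
    ext z
    simp only [mem_Ici, mem_iInter, mem_Ioi]
    exact ⟨fun hz n => (hy_lt n).trans_le hz, fun hz =>
      (isLUB_of_tendsto_atTop hy_mono.monotone hy_lim).2 (forall_mem_range.2 fun n => (hz n).le)⟩
  have hanti : Antitone fun n => Ioi (y n) := fun i j hij => Ioi_subset_Ioi (hy_mono.monotone hij)
  rw [hIci, hanti.measure_iInter (fun n => measurableSet_Ioi.nullMeasurableSet)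
    ⟨0, measure_ne_top ν _⟩]
  exact le_iInf fun n =>
    (not_le.1 (notMem_of_lt_csInf (s := {a | ν (Ioi a) ≤ h}) (hy_lt n)
      (bddBelow_setOf_measure_Ioi_le ν hh))).le

end TailQuantile

end MeasureTheory

/-- Splitting a set of finite positive measure into two halves by the median of `u`. -/
theorem median_splitting
    {Y : Type*} [MeasurableSpace Y] (m : Measure Y)
    (hna : ∀ A : Set Y, MeasurableSet A → 0 < m A →
      ∃ A' : Set Y, MeasurableSet A' ∧ A' ⊆ A ∧ 0 < m A' ∧ m A' < m A)
    (B : Set Y) (hB : MeasurableSet B) (hB0 : 0 < m B) (hBfin : m B < ∞)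
    (u : Y → ℝ) (hu : Measurable u) :
    ∃ Bp Bm : Set Y, MeasurableSet Bp ∧ MeasurableSet Bm ∧ Disjoint Bp Bm ∧
      Bp ∪ Bm = B ∧ m Bp = m B / 2 ∧ m Bm = m B / 2 ∧
      ∀ x ∈ Bm, ∀ y ∈ Bp,
        u x ≤ sInf {a : ℝ | m (B ∩ {z | a < u z}) ≤ m B / 2} ∧
        sInf {a : ℝ | m (B ∩ {z | a < u z}) ≤ m B / 2} ≤ u y := by
  set M := sInf {a : ℝ | m (B ∩ {z | a < u z}) ≤ m B / 2}
  have : IsFiniteMeasure (m.restrict B) := isFiniteMeasure_restrict.2 hBfin.ne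
  set ν := (m.restrict B).map u
  have hν (s : Set ℝ) (hs : MeasurableSet s) : ν s = m (B ∩ u ⁻¹' s) := by
    rw [Measure.map_apply hu hs, Measure.restrict_apply (hu hs), inter_comm]
  have hM : M = tailQuantile ν (m B / 2) := by
    simp only [M, tailQuantile, hν _ measurableSet_Ioi]
    rfl
  have hνB : ν univ = m B := by rw [hν _ .univ, preimage_univ, inter_univ]
  have hP : m (B ∩ u ⁻¹' Ioi M) ≤ m B / 2 := by
    rw [← hν _ measurableSet_Ioi, hM]
    exact measure_Ioi_tailQuantile_le ν (ENNReal.half_pos hB0.ne')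
  have hQ : m B / 2 ≤ m (B ∩ u ⁻¹' Ici M) := by
    rw [← hν _ measurableSet_Ici, hM]
    exact le_measure_Ici_tailQuantile ν (hνB.symm ▸ ENNReal.half_lt_self hB0.ne' hBfin.ne)
  obtain ⟨Bp, hPBp, hBpQ, hBp, hBpm⟩ := Measure.IsNonatomic.exists_between_measure_eq hna
    (hB.inter (hu measurableSet_Ioi)) (hB.inter (hu measurableSet_Ici))
    (inter_subset_inter_right _ (preimage_mono Ioi_subset_Ici_self))
    (ne_top_of_le_ne_top hBfin.ne (measure_mono inter_subset_left)) hP hQ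
  have hBpB : Bp ⊆ B := hBpQ.trans inter_subset_left
  refine ⟨Bp, B \ Bp, hBp, hB.diff hBp, disjoint_sdiff_right, union_sdiff_cancel hBpB, hBpm, ?_,
    fun x hx y hy => ⟨not_lt.1 fun hxM => hx.2 (hPBp ⟨hx.1, hxM⟩), (hBpQ hy).2⟩⟩
  rw [measure_sdiff hBpB hBp.nullMeasurableSet (hBpm ▸ ENNReal.div_ne_top hBfin.ne two_ne_zero),
    hBpm, ENNReal.sub_half hBfin.ne]
end
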